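/- arXiv:2007.15493 — 2 statements merged into one kernel-verified Lean document; each statement's English description precedes it below -/
import Mathlib

section
/- For every bounded set F ⊆ ℝ^d and every θ ∈ (0,1), the Assouad spectrum satisfies dim_A^θ F ≤ min{ dim_A F, (upper box dimension of F)/(1 − θ) }. -/
open Metric Set Filter

/-- The minimal number of balls of radius `r` needed to cover `E ⊆ ℝ^d`. -/
noncomputable def covN {d : ℕ} (r : ℝ) (E : Set (EuclideanSpace ℝ (Fin d))) : ℕ :=
  sInf {n : ℕ | ∃ S : Finset (EuclideanSpace ℝ (Fin d)), S.card = n ∧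
    E ⊆ ⋃ x ∈ S, Metric.ball x r}

/-- The Assouad dimension of `F ⊆ ℝ^d`. -/
noncomputable def dimA {d : ℕ} (F : Set (EuclideanSpace ℝ (Fin d))) : ℝ :=
  sInf {s : ℝ | 0 ≤ s ∧ ∃ C > (0 : ℝ), ∀ r R : ℝ, 0 < r → r < R → ∀ x ∈ F,
    (covN r (Metric.ball x R ∩ F) : ℝ) ≤ C * (R / r) ^ s}

/-- The lower dimension of `F ⊆ ℝ^d`. -/
noncomputable def dimL {d : ℕ} (F : Set (EuclideanSpace ℝ (Fin d))) : ℝ :=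
  sSup {s : ℝ | 0 ≤ s ∧ ∃ C > (0 : ℝ), ∀ r R : ℝ, 0 < r → r < R → R ≤ Metric.diam F →
    ∀ x ∈ F, C * (R / r) ^ s ≤ (covN r (Metric.ball x R ∩ F) : ℝ)}

/-- The Assouad spectrum of `F ⊆ ℝ^d` at `θ`. -/
noncomputable def dimASpec {d : ℕ} (θ : ℝ) (F : Set (EuclideanSpace ℝ (Fin d))) : ℝ :=
  sInf {s : ℝ | 0 ≤ s ∧ ∃ C > (0 : ℝ), ∀ r : ℝ, 0 < r → r < 1 → ∀ x ∈ F,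
    (covN r (Metric.ball x (r ^ θ) ∩ F) : ℝ) ≤ C * (r ^ θ / r) ^ s}

/-- The lower spectrum of `F ⊆ ℝ^d` at `θ`. -/
noncomputable def dimLSpec {d : ℕ} (θ : ℝ) (F : Set (EuclideanSpace ℝ (Fin d))) : ℝ :=
  sSup {s : ℝ | 0 ≤ s ∧ ∃ C > (0 : ℝ), ∀ r : ℝ, 0 < r → r < 1 → ∀ x ∈ F,
    C * (r ^ θ / r) ^ s ≤ (covN r (Metric.ball x (r ^ θ) ∩ F) : ℝ)}

/-- The upper box dimension of `F ⊆ ℝ^d`. -/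
noncomputable def ubDim {d : ℕ} (F : Set (EuclideanSpace ℝ (Fin d))) : ℝ :=
  Filter.limsup (fun r : ℝ => Real.log (covN r F) / (-Real.log r)) (nhdsWithin 0 (Set.Ioi 0))

/-- The lower box dimension of `F ⊆ ℝ^d`. -/
noncomputable def lbDim {d : ℕ} (F : Set (EuclideanSpace ℝ (Fin d))) : ℝ :=
  Filter.liminf (fun r : ℝ => Real.log (covN r F) / (-Real.log r)) (nhdsWithin 0 (Set.Ioi 0))

/-!
Taking `R = r ^ θ > r` in the definition of the Assouad dimension shows that every admissible
exponent for `dimA` is admissible for `dimASpec θ`; the admissible set for `dimA` is nonempty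
because a volume comparison bounds `N_r (ball x R)` by `(4R/r)^d`. For the box-dimension bound,
`N_r (ball x (r^θ) ∩ F) ≤ N_r F ≤ r^(-t)` for small `r` whenever `t` exceeds the upper box
dimension, and `r^(-t) = (r^θ / r)^(t / (1 - θ))`; large `r` only cost a constant.
-/

open MeasureTheory Module Topology
open scoped ENNReal

/-- Disjoint balls of radius `r / 2` around the points of `S` fill at most the volume of
`ball x (2 * R)`. -/
lemma Finset.card_le_of_subset_ball_of_pairwise_le_dist {E : Type*} [NormedAddCommGroup E]
    [NormedSpace ℝ E] [FiniteDimensional ℝ E] {x : E} {r R : ℝ} (hr : 0 < r) (hrR : r ≤ R)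
    {S : Finset E} (hS : (S : Set E) ⊆ ball x R)
    (hsep : (S : Set E).Pairwise fun a b => r ≤ dist a b) :
    (S.card : ℝ) ≤ (4 * R / r) ^ finrank ℝ E := by
  borelize E
  have hR : 0 < R := hr.trans_le hrR
  set μ : Measure E := Measure.addHaar
  have hdisj : (S : Set E).PairwiseDisjoint (ball · (r / 2)) := fun a ha b hb hab =>
    ball_disjoint_ball (by linarith [hsep ha hb hab])
  have hsub : ⋃ s ∈ S, ball s (r / 2) ⊆ ball x (2 * R) :=
    iUnion₂_subset fun s hs => ball_subset_ball' (by linarith [mem_ball.1 (hS hs)])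
  have hvol : (S.card : ℝ≥0∞) * μ (ball x (r / 2)) ≤ μ (ball x (2 * R)) :=
    calc (S.card : ℝ≥0∞) * μ (ball x (r / 2))
        = ∑ s ∈ S, μ (ball s (r / 2)) := by
          simp [Measure.addHaar_ball_center μ _ (r / 2)]
      _ = μ (⋃ s ∈ S, ball s (r / 2)) :=
          (measure_biUnion_finset hdisj fun _ _ => measurableSet_ball).symm
      _ ≤ μ (ball x (2 * R)) := measure_mono hsub
  have hunit_ne_zero : μ (ball 0 1) ≠ 0 := (measure_ball_pos μ 0 one_pos).ne'
  have hunit_ne_top : μ (ball 0 1) ≠ ∞ := measure_ball_lt_top.ne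
  rw [Measure.addHaar_ball_of_pos μ x (by positivity), Measure.addHaar_ball_of_pos μ x
    (by positivity), ← mul_assoc, ENNReal.mul_le_mul_iff_left hunit_ne_zero hunit_ne_top,
    ← ENNReal.ofReal_natCast, ← ENNReal.ofReal_mul (by positivity),
    ENNReal.ofReal_le_ofReal_iff (by positivity)] at hvol
  rw [show 4 * R / r = 2 * R / (r / 2) by field_simp; ring, div_pow, le_div_iff₀ (by positivity)]
  exact hvol

/-- A maximal `r`-separated subset of `A` is an `r`-net of `A`. -/
lemma exists_finset_card_le_subset_iUnion_ball {X : Type*} [PseudoMetricSpace X] {A : Set X}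
    {r : ℝ} (hr : 0 < r) {N : ℕ}
    (hN : ∀ S : Finset X, (S : Set X) ⊆ A → (S : Set X).Pairwise (fun a b => r ≤ dist a b) →
      S.card ≤ N) :
    ∃ S : Finset X, S.card ≤ N ∧ A ⊆ ⋃ y ∈ S, ball y r := by
  classical
  let IsSepCard : ℕ → Prop := fun n => ∃ S : Finset X, (S : Set X) ⊆ A ∧
    (S : Set X).Pairwise (fun a b => r ≤ dist a b) ∧ S.card = n
  obtain ⟨S, hSA, hSsep, hScard⟩ : IsSepCard (Nat.findGreatest IsSepCard N) :=
    Nat.findGreatest_spec (Nat.zero_le N) ⟨∅, by simp, by simp, rfl⟩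
  refine ⟨S, hScard ▸ hN S hSA hSsep, fun y hy => ?_⟩
  by_contra hcov
  have hfar : ∀ s ∈ S, r ≤ dist y s := fun s hs => by
    by_contra! hlt
    exact hcov (mem_iUnion₂.2 ⟨s, hs, hlt⟩)
  have hyS : y ∉ S := fun hyS => by linarith [hfar y hyS, dist_self y]
  have hTA : ((insert y S : Finset X) : Set X) ⊆ A := by
    rw [Finset.coe_insert]
    exact Set.insert_subset hy hSA
  have hTsep : ((insert y S : Finset X) : Set X).Pairwise (fun a b => r ≤ dist a b) := by
    rw [Finset.coe_insert]
    exact hSsep.insert fun b hb _ => ⟨hfar b hb, dist_comm y b ▸ hfar b hb⟩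
  have hTcard := Finset.card_insert_of_notMem hyS
  have : S.card + 1 ≤ Nat.findGreatest IsSepCard N :=
    Nat.le_findGreatest (hTcard ▸ hN _ hTA hTsep) ⟨insert y S, hTA, hTsep, hTcard⟩
  omega

section CoveringNumber

variable {d : ℕ}

lemma covN_le_card {r : ℝ} {E : Set (EuclideanSpace ℝ (Fin d))}
    (S : Finset (EuclideanSpace ℝ (Fin d))) (h : E ⊆ ⋃ y ∈ S, ball y r) : covN r E ≤ S.card :=
  Nat.sInf_le ⟨S, rfl, h⟩

lemma exists_finset_card_eq_covN {r : ℝ} {E : Set (EuclideanSpace ℝ (Fin d))}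
    (hE : Bornology.IsBounded E) (hr : 0 < r) :
    ∃ S : Finset (EuclideanSpace ℝ (Fin d)), S.card = covN r E ∧ E ⊆ ⋃ y ∈ S, ball y r := by
  obtain ⟨t, ht, hcover⟩ := totallyBounded_iff.1
    (hE.isCompact_closure.totallyBounded.subset subset_closure) r hr
  exact Nat.sInf_mem (s := {n | ∃ S : Finset _, S.card = n ∧ E ⊆ ⋃ y ∈ S, ball y r})
    ⟨_, ht.toFinset, rfl, by simpa using hcover⟩

lemma covN_mono {r : ℝ} {E E' : Set (EuclideanSpace ℝ (Fin d))}
    (hE' : Bornology.IsBounded E') (hr : 0 < r) (h : E ⊆ E') : covN r E ≤ covN r E' := by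
  obtain ⟨S, hS, hcover⟩ := exists_finset_card_eq_covN hE' hr
  exact hS ▸ covN_le_card S (h.trans hcover)

lemma covN_anti {r₁ r₂ : ℝ} {E : Set (EuclideanSpace ℝ (Fin d))}
    (hE : Bornology.IsBounded E) (hr₁ : 0 < r₁) (h : r₁ ≤ r₂) : covN r₂ E ≤ covN r₁ E := by
  obtain ⟨S, hS, hcover⟩ := exists_finset_card_eq_covN hE hr₁
  exact hS ▸ covN_le_card S (hcover.trans (iUnion₂_mono fun y _ => ball_subset_ball h))

lemma covN_ball_le (x : EuclideanSpace ℝ (Fin d)) {r R : ℝ} (hr : 0 < r) (hrR : r ≤ R) :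
    (covN r (ball x R) : ℝ) ≤ (4 * R / r) ^ d := by
  have hR : 0 < R := hr.trans_le hrR
  obtain ⟨S, hS, hcover⟩ := exists_finset_card_le_subset_iUnion_ball (A := ball x R) hr
    (N := ⌊(4 * R / r) ^ d⌋₊) fun S hSA hsep => Nat.le_floor <| by
      simpa using S.card_le_of_subset_ball_of_pairwise_le_dist hr hrR hSA hsep
  calc (covN r (ball x R) : ℝ) ≤ S.card := by exact_mod_cast covN_le_card S hcover
    _ ≤ ⌊(4 * R / r) ^ d⌋₊ := by exact_mod_cast hS
    _ ≤ (4 * R / r) ^ d := Nat.floor_le (by positivity)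

end CoveringNumber

lemma Real.natCast_le_rpow_neg_of_log_div_neg_log_le {N : ℕ} {r t : ℝ} (hr₀ : 0 < r)
    (hr₁ : r < 1) (h : Real.log N / -Real.log r ≤ t) : (N : ℝ) ≤ r ^ (-t) := by
  rcases N.eq_zero_or_pos with rfl | hN
  · simpa using (Real.rpow_pos_of_pos hr₀ (-t)).le
  rw [div_le_iff₀ (neg_pos.2 (Real.log_neg hr₀ hr₁))] at h
  rw [Real.le_rpow_iff_log_le (by exact_mod_cast hN) hr₀]
  linarith

lemma Real.log_div_neg_log_le_of_natCast_le_rpow_neg {N : ℕ} {r t : ℝ} (hr₀ : 0 < r)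
    (hr₁ : r < 1) (ht : 0 ≤ t) (h : (N : ℝ) ≤ r ^ (-t)) : Real.log N / -Real.log r ≤ t := by
  have hlog : 0 < -Real.log r := neg_pos.2 (Real.log_neg hr₀ hr₁)
  rw [div_le_iff₀ hlog]
  rcases N.eq_zero_or_pos with rfl | hN
  · simpa using mul_nonneg ht hlog.le
  have := (Real.le_rpow_iff_log_le (by exact_mod_cast hN) hr₀).1 h
  linarith

section Dimensions

variable {d : ℕ} {F : Set (EuclideanSpace ℝ (Fin d))} {θ : ℝ}

lemma dimASpec_le_dimA (hθ : θ < 1) : dimASpec θ F ≤ dimA F := by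
  refine csInf_le_csInf ⟨0, fun s hs => hs.1⟩ ⟨d, d.cast_nonneg, 4 ^ d, by positivity,
    fun r R hr hrR x _ => ?_⟩ ?_
  · calc (covN r (ball x R ∩ F) : ℝ) ≤ covN r (ball x R) := by
          exact_mod_cast covN_mono isBounded_ball hr inter_subset_left
      _ ≤ (4 * R / r) ^ d := covN_ball_le x hr hrR.le
      _ = 4 ^ d * (R / r) ^ (d : ℝ) := by rw [Real.rpow_natCast, mul_div_assoc, mul_pow]
  · rintro s ⟨hs, C, hC, h⟩
    exact ⟨hs, C, hC, fun r hr hr₁ x hx =>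
      h r (r ^ θ) hr (by simpa using Real.rpow_lt_rpow_of_exponent_gt hr hr₁ hθ) x hx⟩

lemma eventually_covN_le_rpow_of_isBounded (hF : Bornology.IsBounded F) :
    ∀ᶠ r in 𝓝[>] 0, (covN r F : ℝ) ≤ r ^ (-(2 * d : ℝ)) := by
  obtain ⟨R, hR⟩ := hF.subset_ball 0
  set R' := max R 1
  have hR' : 1 ≤ R' := le_max_right R 1
  filter_upwards [Ioo_mem_nhdsGT (show (0 : ℝ) < 1 / (4 * R') by positivity)]
    with r ⟨hr₀, hr⟩
  rw [one_div] at hr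
  have h4R' : 4 * R' ≤ r⁻¹ := (le_inv_comm₀ (by positivity) hr₀).2 hr.le
  have hrR' : r ≤ R' := by
    have : (4 * R')⁻¹ ≤ 1 := inv_le_one_of_one_le₀ (by linarith)
    linarith
  calc (covN r F : ℝ) ≤ covN r (ball 0 R') := by
        exact_mod_cast covN_mono isBounded_ball hr₀
          (hR.trans (ball_subset_ball (le_max_left R 1)))
    _ ≤ (4 * R' / r) ^ d := covN_ball_le 0 hr₀ hrR'
    _ ≤ (r⁻¹ ^ 2) ^ d := by
        gcongr
        rw [div_eq_mul_inv, sq]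
        exact mul_le_mul_of_nonneg_right h4R' (by positivity)
    _ = r ^ (-(2 * d : ℝ)) := by
        rw [Real.rpow_neg hr₀.le, show (2 * d : ℝ) = ((2 * d : ℕ) : ℝ) by push_cast; ring,
          Real.rpow_natCast, pow_mul, inv_pow, inv_pow]

lemma isBoundedUnder_log_covN_div (hF : Bornology.IsBounded F) :
    IsBoundedUnder (· ≤ ·) (𝓝[>] 0) fun r => Real.log (covN r F) / -Real.log r :=
  isBoundedUnder_of_eventually_le <| by
    filter_upwards [eventually_covN_le_rpow_of_isBounded hF, Ioo_mem_nhdsGT one_pos]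
      with r h ⟨hr₀, hr₁⟩
    exact Real.log_div_neg_log_le_of_natCast_le_rpow_neg hr₀ hr₁ (by positivity) h

lemma ubDim_nonneg (hF : Bornology.IsBounded F) : 0 ≤ ubDim F := by
  refine le_limsup_of_frequently_le (Eventually.frequently ?_) (isBoundedUnder_log_covN_div hF)
  filter_upwards [Ioo_mem_nhdsGT one_pos] with r ⟨hr₀, hr₁⟩
  exact div_nonneg (Real.log_natCast_nonneg _) (neg_pos.2 (Real.log_neg hr₀ hr₁)).le

lemma dimASpec_le_of_eventually_covN_le (hF : Bornology.IsBounded F) (hθ : θ < 1) {t : ℝ}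
    (ht : 0 ≤ t) (h : ∀ᶠ r in 𝓝[>] 0, (covN r F : ℝ) ≤ r ^ (-t)) :
    dimASpec θ F ≤ t / (1 - θ) := by
  obtain ⟨δ, hδ, hsmall⟩ := (nhdsGT_basis (0 : ℝ)).eventually_iff.1 h
  have h1θ : 0 < 1 - θ := by linarith
  refine csInf_le ⟨0, fun s hs => hs.1⟩ ⟨div_nonneg ht h1θ.le, covN δ F + 1, by positivity,
    fun r hr₀ hr₁ x _ => ?_⟩
  have hscale : (r ^ θ / r) ^ (t / (1 - θ)) = r ^ (-t) := by
    rw [← Real.rpow_sub_one hr₀.ne', ← Real.rpow_mul hr₀.le]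
    congr 1
    field_simp
    ring
  have hone : 1 ≤ r ^ (-t) :=
    Real.one_le_rpow_of_pos_of_le_one_of_nonpos hr₀ hr₁.le (by linarith)
  rw [hscale]
  calc (covN r (ball x (r ^ θ) ∩ F) : ℝ) ≤ covN r F := by
        exact_mod_cast covN_mono hF hr₀ inter_subset_right
    _ ≤ max (r ^ (-t)) (covN δ F) := by
        rcases lt_or_ge r δ with hrδ | hδr
        · exact le_max_of_le_left (hsmall ⟨hr₀, hrδ⟩)
        · exact le_max_of_le_right (by exact_mod_cast covN_anti hF hδ hδr)
    _ ≤ (covN δ F + 1) * r ^ (-t) := max_le (by nlinarith) (by nlinarith)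

lemma dimASpec_le_ubDim_div (hF : Bornology.IsBounded F) (hθ : θ < 1) :
    dimASpec θ F ≤ ubDim F / (1 - θ) := by
  have h1θ : 0 < 1 - θ := by linarith
  rw [le_div_iff₀ h1θ]
  refine le_of_forall_gt_imp_ge_of_dense fun t ht => ?_
  rw [← le_div_iff₀ h1θ]
  refine dimASpec_le_of_eventually_covN_le hF hθ ((ubDim_nonneg hF).trans ht.le) ?_
  filter_upwards [eventually_lt_of_limsup_lt ht (isBoundedUnder_log_covN_div hF),
    Ioo_mem_nhdsGT one_pos] with r hr ⟨hr₀, hr₁⟩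
  exact Real.natCast_le_rpow_neg_of_log_div_neg_log_le hr₀ hr₁ hr.le

end Dimensions

/-- For every bounded `F ⊆ ℝ^d` and `θ ∈ (0,1)`, the Assouad spectrum satisfies
`dim_A^θ F ≤ min { dim_A F, (upper box dimension of F) / (1 - θ) }`. -/
theorem assouad_spectrum_upper_bound {d : ℕ} (F : Set (EuclideanSpace ℝ (Fin d)))
    (hF : Bornology.IsBounded F) (θ : ℝ) (hθ : θ ∈ Set.Ioo (0 : ℝ) 1) :
    dimASpec θ F ≤ min (dimA F) (ubDim F / (1 - θ)) :=
  le_min (dimASpec_le_dimA hθ.2) (dimASpec_le_ubDim_div hF hθ.2)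
end

section
/- Let h ≥ 1, p ≥ 1, and let 0 < r_{j+1} ≤ r_j be real numbers. Set r_m = r_j·(r_{j+1}/r_j)^{1/(1+p)}. Then for all r, R with r_{j+1} ≤ r ≤ r_m ≤ R ≤ r_j, one has R^{h+(h−1)p} / (r · r_j^{(h−1)p} · r_{j+1}^{h−1}) ≤ (R/r)^{h+(h−1)p}. -/
/-!
Write `r_m = r_j (r_{j+1}/r_j)^{1/(1+p)}`, so that `r_m^{1+p} = r_j^p r_{j+1}`. From `r ≤ r_m` we get
`r^{1+p} ≤ r_j^p r_{j+1}`, and raising this to the power `h - 1 ≥ 0` and multiplying by `r` gives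
`r^{h+(h-1)p} ≤ r r_j^{(h-1)p} r_{j+1}^{h-1}`, since `h + (h-1)p = 1 + (h-1)(1+p)`.
Dividing `R^{h+(h-1)p}` by the larger denominator gives the claim.
-/

open Real

noncomputable section

/-- The paper's `r_m`: on a logarithmic scale it lies a fraction `1 / (1 + p)` of the way from `a` down to `b`. -/
def transitionRadius (p a b : ℝ) : ℝ := a * (b / a) ^ (1 / (1 + p))

theorem transitionRadius_pos {p a b : ℝ} (ha : 0 < a) (hb : 0 < b) :
    0 < transitionRadius p a b := by
  unfold transitionRadius
  positivity

theorem transitionRadius_rpow_one_add {p a b : ℝ} (hp : 1 + p ≠ 0) (ha : 0 < a) (hb : 0 ≤ b) :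
    transitionRadius p a b ^ (1 + p) = a ^ p * b := by
  unfold transitionRadius
  rw [mul_rpow ha.le (by positivity), ← rpow_mul (by positivity), one_div_mul_cancel hp, rpow_one,
    rpow_add ha, rpow_one]
  field_simp

theorem rpow_one_add_le_of_le_transitionRadius {p a b r : ℝ} (hp : 0 < 1 + p) (ha : 0 < a)
    (hb : 0 ≤ b) (hr : 0 ≤ r) (hrm : r ≤ transitionRadius p a b) :
    r ^ (1 + p) ≤ a ^ p * b := by
  rw [← transitionRadius_rpow_one_add hp.ne' ha hb]
  exact rpow_le_rpow hr hrm hp.le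

theorem rpow_le_mul_rpow_mul_rpow_of_rpow_one_add_le {h p a b r : ℝ} (hh : 1 ≤ h) (ha : 0 ≤ a)
    (hb : 0 ≤ b) (hr : 0 < r) (hr_le : r ^ (1 + p) ≤ a ^ p * b) :
    r ^ (h + (h - 1) * p) ≤ r * a ^ ((h - 1) * p) * b ^ (h - 1) := by
  have hpow : (r ^ (1 + p)) ^ (h - 1) ≤ (a ^ p * b) ^ (h - 1) :=
    rpow_le_rpow (by positivity) hr_le (by linarith)
  calc r ^ (h + (h - 1) * p) = r * (r ^ (1 + p)) ^ (h - 1) := by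
        rw [show h + (h - 1) * p = 1 + (1 + p) * (h - 1) by ring, rpow_add hr, rpow_one,
          rpow_mul hr.le]
    _ ≤ r * (a ^ p * b) ^ (h - 1) := mul_le_mul_of_nonneg_left hpow hr.le
    _ = r * a ^ ((h - 1) * p) * b ^ (h - 1) := by
        rw [mul_rpow (by positivity) hb, ← rpow_mul ha, mul_comm p, mul_assoc]

end

theorem measure_ratio_ineq_8_general (h p rj rj1 : ℝ) (hh : 1 ≤ h) (hp : 1 ≤ p)
    (h0 : 0 < rj1) (h1 : rj1 ≤ rj) (r R : ℝ) (hr1 : rj1 ≤ r)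
    (hrm : r ≤ rj * (rj1 / rj) ^ (1 / (1 + p)))
    (hmR : rj * (rj1 / rj) ^ (1 / (1 + p)) ≤ R) :
    R ^ (h + (h - 1) * p) / (r * rj ^ ((h - 1) * p) * rj1 ^ (h - 1)) ≤ (R / r) ^ (h + (h - 1) * p) := by
  have hrj : 0 < rj := h0.trans_le h1
  have hr : 0 < r := h0.trans_le hr1
  have hR : 0 < R := (transitionRadius_pos hrj h0).trans_le hmR
  have hr_le : r ^ (1 + p) ≤ rj ^ p * rj1 :=
    rpow_one_add_le_of_le_transitionRadius (by linarith) hrj h0.le hr.le hrm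
  have hdenom : r ^ (h + (h - 1) * p) ≤ r * rj ^ ((h - 1) * p) * rj1 ^ (h - 1) :=
    rpow_le_mul_rpow_mul_rpow_of_rpow_one_add_le hh hrj.le h0.le hr hr_le
  rw [div_rpow hR.le hr.le]
  exact div_le_div_of_nonneg_left (by positivity) (by positivity) hdenom

/-- Key algebraic inequality for the Assouad dimension of the conformal measure, case h ≥ 1. -/
theorem measure_ratio_ineq_8 (h p rj rj1 : ℝ) (hh : 1 ≤ h) (hp : 1 ≤ p)
    (h0 : 0 < rj1) (h1 : rj1 ≤ rj) (r R : ℝ) (hr1 : rj1 ≤ r)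
    (hrm : r ≤ rj * (rj1 / rj) ^ (1 / (1 + p)))
    (hmR : rj * (rj1 / rj) ^ (1 / (1 + p)) ≤ R) (hR : R ≤ rj) :
    R ^ (h + (h - 1) * p) / (r * rj ^ ((h - 1) * p) * rj1 ^ (h - 1)) ≤ (R / r) ^ (h + (h - 1) * p) :=
  measure_ratio_ineq_8_general h p rj rj1 hh hp h0 h1 r R hr1 hrm hmR
end
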